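/- arXiv:1912.01780 — 5 statements merged into one kernel-verified Lean document; each statement's English description precedes it below -/
import Mathlib

section
/- For all integers n ≥ 1 and k ≥ 1, the independence number of the Hamming graph H(n,k) equals k^(n-1). -/
open SimpleGraph Finset

/-- The Hamming graph `H(n,k)` on vertex set `(ZMod k)^n`:
two vertices are adjacent iff they differ in exactly one coordinate. -/
def hammingGraph (n k : ℕ) : SimpleGraph (Fin n → ZMod k) where
  Adj v w := hammingDist v w = 1
  symm := ⟨fun v w h => by simpa only [hammingDist_comm] using h⟩
  loopless := ⟨fun v h => by simp only [hammingDist_self] at h; exact absurd h (by omega)⟩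

/-!
Forgetting the last coordinate is injective on an independent set, since two distinct words
with the same first `n - 1` letters are adjacent; this gives the upper bound `k ^ (n - 1)`.
The words with coordinate sum `0` in `ZMod k` attain it: changing a single letter changes the
sum.
-/

section UpperBound

variable {α : Type*} [DecidableEq α] {m : ℕ}

theorem hammingDist_eq_one_of_init_eq {v w : Fin (m + 1) → α} (hinit : Fin.init v = Fin.init w)
    (hne : v ≠ w) : hammingDist v w = 1 := by
  refine card_eq_one.mpr ⟨Fin.last m, ?_⟩
  ext i
  simp only [mem_filter, mem_univ, true_and, mem_singleton]
  induction i using Fin.lastCases with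
  | last =>
    refine iff_of_true (fun hlast => hne ?_) rfl
    rw [← Fin.snoc_init_self v, ← Fin.snoc_init_self w, hinit, hlast]
  | cast j =>
    exact iff_of_false (not_not.mpr (congrFun hinit j)) (Fin.castSucc_ne_last j)

theorem card_le_pow_of_forall_hammingDist_ne_one [Fintype α] {s : Finset (Fin (m + 1) → α)}
    (hs : ∀ v ∈ s, ∀ w ∈ s, hammingDist v w ≠ 1) : #s ≤ Fintype.card α ^ m := by
  have hinj : Set.InjOn Fin.init (s : Set (Fin (m + 1) → α)) := fun v hv w hw hvw =>
    by_contra fun hne => hs v hv w hw (hammingDist_eq_one_of_init_eq hvw hne)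
  calc #s ≤ #(univ : Finset (Fin m → α)) :=
        card_le_card_of_injOn Fin.init (fun _ _ => mem_univ _) hinj
    _ = Fintype.card α ^ m := by simp

end UpperBound

section SumZero

variable {ι G : Type*} [Fintype ι] [AddCommGroup G] [DecidableEq G]

theorem sum_ne_zero_of_hammingNorm_eq_one {x : ι → G} (hx : hammingNorm x = 1) :
    ∑ i, x i ≠ 0 := by
  obtain ⟨j, hj⟩ := card_eq_one.mp hx
  have hxj : x j ≠ 0 := by simpa using hj.ge (mem_singleton_self j)
  rwa [← sum_filter_ne_zero, hj, sum_singleton]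

theorem hammingDist_ne_one_of_sum_eq {v w : ι → G} (h : ∑ i, v i = ∑ i, w i) :
    hammingDist v w ≠ 1 := by
  rw [hammingDist_eq_hammingNorm]
  refine fun h1 => sum_ne_zero_of_hammingNorm_eq_one h1 ?_
  simp only [Pi.add_apply, Pi.neg_apply, sum_add_distrib, sum_neg_distrib, h, neg_add_cancel]

theorem card_filter_sum_eq_zero [Fintype G] (m : ℕ) :
    #{v : Fin (m + 1) → G | ∑ i, v i = 0} = Fintype.card G ^ m := by
  suffices #{v : Fin (m + 1) → G | ∑ i, v i = 0} = #(univ : Finset (Fin m → G)) by simpa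
  refine card_nbij' Fin.init (fun f => Fin.snoc f (-∑ i, f i)) (fun _ _ => mem_univ _)
    (fun f _ => by simp) (fun v hv => ?_) (fun f _ => Fin.init_snoc _ _)
  have hlast : -∑ i, Fin.init v i = v (Fin.last m) := by
    rw [mem_coe, mem_filter, Fin.sum_univ_castSucc] at hv
    exact neg_eq_of_add_eq_zero_right hv.2
  simp only [hlast, Fin.snoc_init_self]

end SumZero

/-- The independence number of the Hamming graph `H(n,k)` is `k^(n-1)`. -/
theorem hamming_indepNum (n k : ℕ) (hn : 1 ≤ n) (hk : 1 ≤ k) :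
    IsGreatest {m : ℕ | ∃ s : Finset (Fin n → ZMod k),
      (∀ v ∈ s, ∀ w ∈ s, ¬ (hammingGraph n k).Adj v w) ∧ s.card = m}
      (k ^ (n - 1)) := by
  have : NeZero k := ⟨by omega⟩
  obtain ⟨m, rfl⟩ : ∃ m, n = m + 1 := ⟨n - 1, by omega⟩
  rw [Nat.add_sub_cancel]
  constructor
  · refine ⟨({v | ∑ i, v i = 0} : Finset (Fin (m + 1) → ZMod k)), fun v hv w hw => ?_,
      by rw [card_filter_sum_eq_zero, ZMod.card]⟩
    rw [mem_filter] at hv hw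
    exact hammingDist_ne_one_of_sum_eq (hv.2.trans hw.2.symm)
  · rintro _ ⟨s, hs, rfl⟩
    simpa only [ZMod.card] using card_le_pow_of_forall_hammingDist_ne_one hs
end

section
/- Fix a partition [n] = F_1 ∪ ... ∪ F_q, X = {v : ∃ j, F_j ⊆ v⁻¹(0)}, Y = complement of X. Then every vertex v_2 ∈ Y has at most q neighbors in X in the Hamming graph H(n,k). -/
/-! A neighbour `w` of `v` that vanishes on a block `s` on which `v` does not vanish must arise
by zeroing the unique coordinate of `s` where `v` is nonzero, so each block contributes at most
one such neighbour. -/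

open SimpleGraph Finset

section Hamming

variable {ι β : Type*} [Fintype ι] [DecidableEq β]

theorem exists_forall_ne_eq_of_hammingDist_eq_one {v w : ι → β} (h : hammingDist v w = 1) :
    ∃ i, ∀ j ≠ i, v j = w j := by
  obtain ⟨i, hi⟩ := Finset.card_eq_one.mp h
  refine ⟨i, fun j hj => by_contra fun hne => hj ?_⟩
  have hmem : j ∈ Finset.univ.filter fun i => v i ≠ w i := by simpa using hne
  simpa [hi] using hmem

variable [Zero β]

theorem subsingleton_hammingDist_eq_one_of_not_forall_eq_zero {v : ι → β} {s : Finset ι}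
    (hv : ¬ ∀ i ∈ s, v i = 0) :
    {w : ι → β | hammingDist v w = 1 ∧ ∀ i ∈ s, w i = 0}.Subsingleton := by
  obtain ⟨l, hls, hvl⟩ := not_forall₂.mp hv
  have key : ∀ w ∈ {w : ι → β | hammingDist v w = 1 ∧ ∀ i ∈ s, w i = 0},
      ∀ j ≠ l, v j = w j := by
    rintro w ⟨hdist, hw⟩
    obtain ⟨i, hvw⟩ := exists_forall_ne_eq_of_hammingDist_eq_one hdist
    obtain rfl : l = i := by_contra fun hli => hvl ((hvw l hli).trans (hw l hls))
    exact hvw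
  intro w hw w' hw'
  funext j
  by_cases hjl : j = l
  · subst hjl
    rw [hw.2 j hls, hw'.2 j hls]
  · rw [← key w hw j hjl, key w' hw' j hjl]

end Hamming

theorem Y_vertex_degree_in_X_general (n k q : ℕ) (F : Fin q → Finset (Fin n))
    (v₂ : Fin n → ZMod k) (hv₂ : ¬ ∃ j, ∀ ℓ ∈ F j, v₂ ℓ = 0) :
    {w : Fin n → ZMod k |
      (hammingGraph n k).Adj v₂ w ∧ ∃ j, ∀ ℓ ∈ F j, w ℓ = 0}.ncard ≤ q := by
  set N : Fin q → Set (Fin n → ZMod k) :=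
    fun j => {w | hammingDist v₂ w = 1 ∧ ∀ ℓ ∈ F j, w ℓ = 0}
  have hN : ∀ j, (N j).ncard ≤ 1 := fun j =>
    have hsub := subsingleton_hammingDist_eq_one_of_not_forall_eq_zero (not_exists.mp hv₂ j)
    (Set.ncard_le_one_iff hsub.finite).mpr fun ha hb => hsub ha hb
  have hunion : {w : Fin n → ZMod k |
      (hammingGraph n k).Adj v₂ w ∧ ∃ j, ∀ ℓ ∈ F j, w ℓ = 0} = ⋃ j, N j := by
    ext w
    simp [N, hammingGraph]
  calc _ = (⋃ j, N j).ncard := by rw [hunion]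
    _ ≤ ∑ j, (N j).ncard := Set.ncard_iUnion_le_of_fintype N
    _ ≤ ∑ _j : Fin q, 1 := Finset.sum_le_sum fun j _ => hN j
    _ = q := by simp

/-- Every vertex of `Y` has at most `q` neighbors in `X`. -/
theorem Y_vertex_degree_in_X (n k q : ℕ) (F : Fin q → Finset (Fin n))
    (hne : ∀ j, (F j).Nonempty)
    (hdisj : ∀ j₁ j₂, j₁ ≠ j₂ → Disjoint (F j₁) (F j₂))
    (hcover : ∀ ℓ : Fin n, ∃ j, ℓ ∈ F j)
    (v₂ : Fin n → ZMod k) (hv₂ : ¬ ∃ j, ∀ ℓ ∈ F j, v₂ ℓ = 0) :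
    {w : Fin n → ZMod k |
      (hammingGraph n k).Adj v₂ w ∧ ∃ j, ∀ ℓ ∈ F j, w ℓ = 0}.ncard ≤ q :=
  Y_vertex_degree_in_X_general n k q F v₂ hv₂
end

section
/- Fix a partition [n] = F_1 ∪ ... ∪ F_q with |q - √n| < 1 and ||F_j| - √n| < 1 for all j, and i_1, i_2 ∈ ZMod k. The induced subgraph of H(n,k) on X_{i_1} ∪ Y_{i_2} has maximum degree at most ⌈√n⌉. -/
open SimpleGraph Finset

/-!
Changing one coordinate changes the coordinate sum, so every edge of the induced subgraph joins
`X_{i₁}` to `Y_{i₂}`. A neighbour in `Y_{i₂}` of `v ∈ X_{i₁}`, with `v` vanishing on `F_j`, must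
change a coordinate in `F_j`, and its new value is forced to be `i₂ - i₁`: at most `|F_j|` choices.
A neighbour in `X_{i₁}` of `v ∈ Y_{i₂}` vanishes on some block `F_j`; fixing for each `j` a
coordinate `m_j ∈ F_j` with `v m_j ≠ 0`, the neighbour differs from `v` at `m_j`, so it is `v`
with `m_j` set to `0`: at most `q` choices.
-/

theorem Nat.le_ceil_of_lt_add_one {α : Type*} [Ring α] [LinearOrder α] [IsStrictOrderedRing α]
    [FloorSemiring α] {c : ℕ} {x : α} (h : (c : α) < x + 1) : c ≤ ⌈x⌉₊ := by
  have : (c : α) < ⌈x⌉₊ + 1 := h.trans_le (by gcongr; exact Nat.le_ceil x)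
  exact_mod_cast Nat.lt_add_one_iff.mp (by exact_mod_cast this)

theorem Finset.sum_update_eq_sum_add_sub {ι β : Type*} [Fintype ι] [DecidableEq ι]
    [AddCommGroup β] (v : ι → β) (m : ι) (a : β) :
    ∑ i, Function.update v m a i = ∑ i, v i + (a - v m) := by
  rw [sum_update_of_mem (mem_univ m), sdiff_singleton_eq_erase, ← add_sum_erase _ v (mem_univ m)]
  abel

-- `ZMod 0 = ℤ`, so neighbourhoods are not a priori finite and `ncard` alone would give junk.
theorem Set.ncard_le_of_subset_of_encard_le {α : Type*} {s t : Set α} {c : ℕ} (hts : t ⊆ s)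
    (hs : s.encard ≤ c) : t.ncard ≤ c := by
  have ht : t.encard ≤ c := (Set.encard_le_encard hts).trans hs
  rw [← Nat.cast_le (α := ℕ∞), (Set.finite_of_encard_le_coe ht).cast_ncard_eq]
  exact ht

section hamming

variable {ι β : Type*} [Fintype ι] [DecidableEq ι] [DecidableEq β] {v w : ι → β}

theorem eq_update_of_hammingDist_eq_one (h : hammingDist v w = 1) {m : ι} (hm : v m ≠ w m) :
    w = Function.update v m (w m) := by
  ext i
  rcases eq_or_ne i m with rfl | hi
  · simp
  rw [Function.update_of_ne hi]
  by_contra hne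
  have h2 : 2 ≤ hammingDist v w := by
    rw [← card_pair hi]
    exact card_le_card (by simp [insert_subset_iff, hm, Ne.symm hne])
  omega

theorem sum_ne_sum_of_hammingDist_eq_one [AddCommGroup β] (h : hammingDist v w = 1) :
    ∑ i, v i ≠ ∑ i, w i := by
  obtain ⟨m, hm⟩ := Function.ne_iff.mp (hammingDist_ne_zero.mp (h ▸ one_ne_zero))
  rw [eq_update_of_hammingDist_eq_one h hm, sum_update_eq_sum_add_sub]
  simpa [sub_eq_zero] using hm.symm

theorem encard_setOf_hammingDist_eq_one_sum_eq_le [AddCommGroup β] {s : Finset ι}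
    (hv : ∀ ℓ ∈ s, v ℓ = 0) (c : β) :
    {w | hammingDist v w = 1 ∧ ∑ i, w i = c ∧ ¬ ∀ ℓ ∈ s, w ℓ = 0}.encard ≤ s.card := by
  have hsub : {w | hammingDist v w = 1 ∧ ∑ i, w i = c ∧ ¬ ∀ ℓ ∈ s, w ℓ = 0} ⊆
      ↑(s.image fun m => Function.update v m (c - ∑ i, v i)) := by
    rintro w ⟨hw, hc, hws⟩
    obtain ⟨m, hms, hm⟩ : ∃ m ∈ s, w m ≠ 0 := by simpa using hws
    have hupd := eq_update_of_hammingDist_eq_one hw (m := m) (by rw [hv m hms]; exact hm.symm)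
    have hwm : w m = c - ∑ i, v i := by
      rw [← hc, hupd, sum_update_eq_sum_add_sub, hv m hms, Function.update_self]
      abel
    exact mem_image.mpr ⟨m, hms, by rw [← hwm, ← hupd]⟩
  calc _ ≤ _ := Set.encard_le_encard hsub
    _ = _ := Set.encard_coe_eq_coe_finsetCard _
    _ ≤ s.card := Nat.cast_le.mpr card_image_le

theorem encard_setOf_hammingDist_eq_one_exists_le [Zero β] {κ : Type*} [Fintype κ]
    (F : κ → Finset ι) (hv : ∀ j, ¬ ∀ ℓ ∈ F j, v ℓ = 0) :
    {w | hammingDist v w = 1 ∧ ∃ j, ∀ ℓ ∈ F j, w ℓ = 0}.encard ≤ Fintype.card κ := by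
  choose m hmF hm using fun j => by simpa using hv j
  have hsub : {w | hammingDist v w = 1 ∧ ∃ j, ∀ ℓ ∈ F j, w ℓ = 0} ⊆
      ↑(univ.image fun j => Function.update v (m j) 0) := by
    rintro w ⟨hw, j, hwj⟩
    refine mem_image.mpr ⟨j, mem_univ j, ?_⟩
    rw [eq_update_of_hammingDist_eq_one hw (m := m j) (by rw [hwj _ (hmF j)]; exact hm j),
      hwj _ (hmF j)]
  calc _ ≤ _ := Set.encard_le_encard hsub
    _ = _ := Set.encard_coe_eq_coe_finsetCard _
    _ ≤ Fintype.card κ := Nat.cast_le.mpr card_image_le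

end hamming

theorem induced_maxDegree_le_general (n k q : ℕ) (F : Fin q → Finset (Fin n))
    (hq : |(q : ℝ) - Real.sqrt n| < 1)
    (hF : ∀ j, |((F j).card : ℝ) - Real.sqrt n| < 1)
    (i₁ i₂ : ZMod k) :
    ∀ v ∈ ({v : Fin n → ZMod k | (∃ j, ∀ ℓ ∈ F j, v ℓ = 0) ∧ ∑ ℓ, v ℓ = i₁} ∪
           {v : Fin n → ZMod k | (∀ j, ¬ ∀ ℓ ∈ F j, v ℓ = 0) ∧ ∑ ℓ, v ℓ = i₂}),
      ({w : Fin n → ZMod k | (hammingGraph n k).Adj v w ∧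
        w ∈ ({v : Fin n → ZMod k | (∃ j, ∀ ℓ ∈ F j, v ℓ = 0) ∧ ∑ ℓ, v ℓ = i₁} ∪
             {v : Fin n → ZMod k | (∀ j, ¬ ∀ ℓ ∈ F j, v ℓ = 0) ∧ ∑ ℓ, v ℓ = i₂})}).ncard
        ≤ ⌈Real.sqrt n⌉₊ := by
  rintro v (⟨⟨j, hvj⟩, hv₁⟩ | ⟨hv, hv₂⟩)
  · refine (Set.ncard_le_of_subset_of_encard_le ?_
      (encard_setOf_hammingDist_eq_one_sum_eq_le hvj i₂)).trans
      (Nat.le_ceil_of_lt_add_one (by linarith [(abs_lt.mp (hF j)).2]))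
    rintro w ⟨hw, ⟨-, hw₁⟩ | ⟨hwF, hw₂⟩⟩
    · exact absurd (hv₁.trans hw₁.symm) (sum_ne_sum_of_hammingDist_eq_one hw)
    · exact ⟨hw, hw₂, hwF j⟩
  · refine (Set.ncard_le_of_subset_of_encard_le ?_
      (encard_setOf_hammingDist_eq_one_exists_le F hv)).trans
      (Nat.le_ceil_of_lt_add_one (by rw [Fintype.card_fin]; linarith [(abs_lt.mp hq).2]))
    rintro w ⟨hw, ⟨hwF, -⟩ | ⟨-, hw₂⟩⟩
    · exact ⟨hw, hwF⟩
    · exact absurd (hv₂.trans hw₂.symm) (sum_ne_sum_of_hammingDist_eq_one hw)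

/-- The induced subgraph of `H(n,k)` on `X_{i₁} ∪ Y_{i₂}` has maximum degree
at most `⌈√n⌉`. -/
theorem induced_maxDegree_le (n k q : ℕ) (F : Fin q → Finset (Fin n))
    (hne : ∀ j, (F j).Nonempty)
    (hdisj : ∀ j₁ j₂, j₁ ≠ j₂ → Disjoint (F j₁) (F j₂))
    (hcover : ∀ ℓ : Fin n, ∃ j, ℓ ∈ F j)
    (hq : |(q : ℝ) - Real.sqrt n| < 1)
    (hF : ∀ j, |((F j).card : ℝ) - Real.sqrt n| < 1)
    (i₁ i₂ : ZMod k) :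
    ∀ v ∈ ({v : Fin n → ZMod k | (∃ j, ∀ ℓ ∈ F j, v ℓ = 0) ∧ ∑ ℓ, v ℓ = i₁} ∪
           {v : Fin n → ZMod k | (∀ j, ¬ ∀ ℓ ∈ F j, v ℓ = 0) ∧ ∑ ℓ, v ℓ = i₂}),
      ({w : Fin n → ZMod k | (hammingGraph n k).Adj v w ∧
        w ∈ ({v : Fin n → ZMod k | (∃ j, ∀ ℓ ∈ F j, v ℓ = 0) ∧ ∑ ℓ, v ℓ = i₁} ∪
             {v : Fin n → ZMod k | (∀ j, ¬ ∀ ℓ ∈ F j, v ℓ = 0) ∧ ∑ ℓ, v ℓ = i₂})}).ncard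
        ≤ ⌈Real.sqrt n⌉₊ :=
  induced_maxDegree_le_general n k q F hq hF i₁ i₂
end

section
/- For real numbers 0 < p ≤ q, the inequality (p+q)·log₂(p+q) ≥ p·log₂(p) + q·log₂(q) + 2p holds. -/
/-!
Write `(p+q)·log₂(p+q) - p·log₂ p - q·log₂ q = p·log₂((p+q)/p) + q·log₂((p+q)/q)`.
Since `p ≤ q`, the first term is at least `p·log₂ 2 = p`. For the second, `(p+q)/q = 1 + p/q`
with `p/q ∈ [0, 1]`, and by concavity `log₂ (1 + x) ≥ x` on `[0, 1]` (the chord from `1` to `2`),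
so it is at least `q·(p/q) = p` as well.
-/

open Real

lemma le_logb_two_one_add {x : ℝ} (hx₀ : 0 ≤ x) (hx₁ : x ≤ 1) : x ≤ logb 2 (1 + x) := by
  have chord := strictConcaveOn_log_Ioi.concaveOn.2 (x := 1) (y := 2)
    (by norm_num : (1 : ℝ) ∈ Set.Ioi 0) (by norm_num : (2 : ℝ) ∈ Set.Ioi 0)
    (sub_nonneg.2 hx₁) hx₀ (sub_add_cancel 1 x)
  simp only [smul_eq_mul, log_one] at chord
  rw [logb, le_div_iff₀ (log_pos one_lt_two)]
  calc x * log 2 ≤ log ((1 - x) * 1 + x * 2) := by linarith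
    _ = log (1 + x) := by ring_nf

lemma le_mul_logb_two_add_sub_logb_left {p q : ℝ} (hp : 0 < p) (hpq : p ≤ q) :
    p ≤ p * (logb 2 (p + q) - logb 2 p) := by
  have h : logb 2 (2 * p) ≤ logb 2 (p + q) := logb_le_logb_of_le one_lt_two (by positivity) (by linarith)
  rw [logb_mul two_ne_zero hp.ne', logb_self_eq_one one_lt_two] at h
  nlinarith

lemma le_mul_logb_two_add_sub_logb_right {p q : ℝ} (hp : 0 ≤ p) (hpq : p ≤ q) (hq : 0 < q) :
    p ≤ q * (logb 2 (p + q) - logb 2 q) := by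
  have hsum : p + q = q * (1 + p / q) := by field_simp; ring
  rw [hsum, logb_mul hq.ne' (by positivity), add_sub_cancel_left]
  calc p = q * (p / q) := by field_simp
    _ ≤ q * logb 2 (1 + p / q) :=
      mul_le_mul_of_nonneg_left
        (le_logb_two_one_add (div_nonneg hp hq.le) ((div_le_one hq).2 hpq)) hq.le

/-- For `0 < p ≤ q`, `(p+q)·log₂(p+q) ≥ p·log₂ p + q·log₂ q + 2p`. -/
theorem log_ineq (p q : ℝ) (hp : 0 < p) (hpq : p ≤ q) :
    (p + q) * Real.logb 2 (p + q)
      ≥ p * Real.logb 2 p + q * Real.logb 2 q + 2 * p := by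
  have left := le_mul_logb_two_add_sub_logb_left hp hpq
  have right := le_mul_logb_two_add_sub_logb_right hp.le hpq (hp.trans_le hpq)
  linarith
end

section
/- Let k ≥ 2 and let S be a (finite, nonempty) subgraph of the Hamming graph H(n,k) with vertex set V(S) and edge set E(S), and let d̄ = 2|E(S)|/|V(S)| be its average degree. Then log₂|V(S)| ≥ d̄/(k-1). Equivalently, |V(S)|·log₂|V(S)| ≥ 2|E(S)|/(k-1). -/
open SimpleGraph Finset

/-!
Count ordered adjacent pairs `(u, v)` of a vertex set `V`, by induction on `n`: split `V` by
first letter into fibres of sizes `a c`. Pairs with equal first letters are adjacent pairs of a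
fibre, handled by induction. Pairs with first letters `c ≠ d` have equal tails, so there are at
most `min (a c) (a d)` of them, and `2 min(a, b) ≤ (a+b) log(a+b) - a log a - b log b` bounds
their total by `(k - 1) (N log N - ∑ a c log (a c))` (logarithms to base 2), exactly the slack
left by the induction.
-/

open Real

lemma le_logb_two_one_add_s17 {t : ℝ} (h0 : 0 ≤ t) (h1 : t ≤ 1) : t ≤ logb 2 (1 + t) := by
  have hchord := strictConcaveOn_log_Ioi.concaveOn.2 (Set.mem_Ioi.2 one_pos)
    (Set.mem_Ioi.2 two_pos) (sub_nonneg.2 h1) h0 (sub_add_cancel 1 t)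
  simp only [smul_eq_mul, log_one, mul_zero, zero_add, mul_one] at hchord
  rw [logb, le_div_iff₀ (log_pos one_lt_two)]
  convert hchord using 2
  ring

lemma two_mul_min_le_mul_logb_add_sub {a b : ℝ} (ha : 0 ≤ a) (hb : 0 ≤ b) :
    2 * min a b ≤ (a + b) * logb 2 (a + b) - a * logb 2 a - b * logb 2 b := by
  wlog hab : a ≤ b generalizing a b
  · have := this hb ha (le_of_not_ge hab)
    rw [min_comm, add_comm]
    linarith
  rcases ha.eq_or_lt with rfl | ha
  · simp [hb]
  have hb : 0 < b := ha.trans_le hab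
  have hsplit : (a + b) * logb 2 (a + b) - a * logb 2 a - b * logb 2 b
      = a * logb 2 ((a + b) / a) + b * logb 2 (1 + a / b) := by
    rw [show 1 + a / b = (a + b) / b by field_simp; ring,
      logb_div (by positivity) ha.ne', logb_div (by positivity) hb.ne']
    ring
  have hfirst : a ≤ a * logb 2 ((a + b) / a) := by
    have : logb 2 2 ≤ logb 2 ((a + b) / a) :=
      logb_le_logb_of_le one_lt_two two_pos (by rw [le_div_iff₀ ha]; linarith)
    rw [logb_self_eq_one one_lt_two] at this
    nlinarith
  have hsecond : a ≤ b * logb 2 (1 + a / b) := by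
    have := mul_le_mul_of_nonneg_left
      (le_logb_two_one_add_s17 (div_nonneg ha.le hb.le) ((div_le_one hb).2 hab)) hb.le
    rwa [mul_div_cancel₀ a hb.ne'] at this
  rw [min_eq_left hab, hsplit]
  linarith

lemma mul_logb_le_mul_logb_of_le {x N : ℝ} (hx : 0 ≤ x) (hxN : x ≤ N) :
    x * logb 2 x ≤ x * logb 2 N := by
  rcases hx.eq_or_lt with rfl | hx
  · simp
  exact mul_le_mul_of_nonneg_left (logb_le_logb_of_le one_lt_two hx hxN) hx.le

section OrderedPairs

variable {ι : Type*} [Fintype ι] [DecidableEq ι]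

lemma sum_sum_erase_add (h : ι → ℝ) :
    ∑ i, ∑ j ∈ univ.erase i, (h i + h j) = 2 * (Fintype.card ι - 1) * ∑ i, h i := by
  have hinner : ∀ i, ∑ j ∈ univ.erase i, (h i + h j)
      = (Fintype.card ι - 1) * h i + (∑ j, h j - h i) := by
    intro i
    rw [sum_add_distrib, sum_const, card_erase_of_mem (mem_univ i), card_univ,
      sum_erase_eq_sub (mem_univ i), nsmul_eq_mul,
      Nat.cast_sub (Fintype.card_pos_iff.2 ⟨i⟩)]
    push_cast
    ring
  simp only [hinner, sum_add_distrib, sum_sub_distrib, ← mul_sum, sum_const, card_univ,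
    nsmul_eq_mul]
  ring

lemma sum_sum_erase_min_le (a : ι → ℝ) (ha : ∀ i, 0 ≤ a i) :
    ∑ i, ∑ j ∈ univ.erase i, min (a i) (a j) ≤
      (Fintype.card ι - 1) * ((∑ i, a i) * logb 2 (∑ i, a i) - ∑ i, a i * logb 2 (a i)) := by
  set N := ∑ i, a i
  set h : ι → ℝ := fun i => a i * logb 2 N - a i * logb 2 (a i)
  have hpair : ∀ i, ∀ j ∈ univ.erase i, min (a i) (a j) ≤ (h i + h j) / 2 := by
    intro i j hj
    have hsum : a i + a j ≤ N := by
      rw [← sum_pair (ne_of_mem_erase hj).symm]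
      exact sum_le_univ_sum_of_nonneg ha
    have := two_mul_min_le_mul_logb_add_sub (ha i) (ha j)
    have := mul_logb_le_mul_logb_of_le (add_nonneg (ha i) (ha j)) hsum
    simp only [h]
    linarith
  calc ∑ i, ∑ j ∈ univ.erase i, min (a i) (a j)
      ≤ ∑ i, ∑ j ∈ univ.erase i, (h i + h j) / 2 :=
        sum_le_sum fun i _ => sum_le_sum (hpair i)
    _ = (Fintype.card ι - 1) * ∑ i, h i := by
        simp only [← sum_div, sum_sum_erase_add]
        ring
    _ = _ := by simp only [h, N, sum_sub_distrib, ← sum_mul]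

end OrderedPairs

section Hamming

variable {α : Type*} [DecidableEq α] {n : ℕ}

def hammingAdjPairs (V : Finset (Fin n → α)) : Finset ((Fin n → α) × (Fin n → α)) :=
  {p ∈ V ×ˢ V | hammingDist p.1 p.2 = 1}

lemma mem_hammingAdjPairs {V : Finset (Fin n → α)} {p : (Fin n → α) × (Fin n → α)} :
    p ∈ hammingAdjPairs V ↔ p.1 ∈ V ∧ p.2 ∈ V ∧ hammingDist p.1 p.2 = 1 := by
  simp [hammingAdjPairs, and_assoc]

lemma hammingDist_eq_tail_add (u v : Fin (n + 1) → α) :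
    hammingDist u v = hammingDist (Fin.tail u) (Fin.tail v) + if u 0 = v 0 then 0 else 1 := by
  rw [hammingDist, hammingDist, card_filter, card_filter, Fin.sum_univ_succ, add_comm, ite_not]
  rfl

omit [DecidableEq α] in
lemma cons_tail_of_head_eq {c : α} {v : Fin (n + 1) → α} (h : v 0 = c) :
    (Fin.cons c (Fin.tail v) : Fin (n + 1) → α) = v :=
  h ▸ Fin.cons_self_tail v

def headFiber (V : Finset (Fin (n + 1) → α)) (c : α) : Finset (Fin n → α) :=
  {v ∈ V | v 0 = c}.image Fin.tail

lemma mem_headFiber {V : Finset (Fin (n + 1) → α)} {c : α} {w : Fin n → α} :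
    w ∈ headFiber V c ↔ (Fin.cons c w : Fin (n + 1) → α) ∈ V := by
  simp only [headFiber, mem_image, mem_filter]
  constructor
  · rintro ⟨v, ⟨hv, hc⟩, rfl⟩
    rwa [cons_tail_of_head_eq hc]
  · exact fun h => ⟨_, ⟨h, Fin.cons_zero _ _⟩, Fin.tail_cons _ _⟩

lemma card_headFiber (V : Finset (Fin (n + 1) → α)) (c : α) :
    #(headFiber V c) = #{v ∈ V | v 0 = c} := by
  refine card_image_of_injOn fun u hu v hv huv => ?_
  rw [coe_filter] at hu hv
  rw [← cons_tail_of_head_eq hu.2, ← cons_tail_of_head_eq hv.2, huv]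

lemma sum_card_headFiber [Fintype α] (V : Finset (Fin (n + 1) → α)) :
    ∑ c, #(headFiber V c) = #V := by
  simp only [card_headFiber]
  exact (card_eq_sum_card_fiberwise fun v _ => mem_coe.2 (mem_univ (v 0))).symm

lemma card_hammingAdjPairs_filter_head_eq_le (V : Finset (Fin (n + 1) → α)) (c : α) :
    #{p ∈ hammingAdjPairs V | (p.1 0, p.2 0) = (c, c)} ≤
      #(hammingAdjPairs (headFiber V c)) := by
  refine (card_le_card fun p hp => ?_).trans
    (card_image_le (f := Prod.map (Fin.cons c) (Fin.cons c)))
  obtain ⟨⟨h1, h2, hd⟩, hhead⟩ := by simpa only [mem_filter, mem_hammingAdjPairs] using hp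
  simp only [Prod.mk.injEq] at hhead
  have hd' : hammingDist (Fin.tail p.1) (Fin.tail p.2) = 1 := by
    have := hammingDist_eq_tail_add p.1 p.2
    rw [if_pos (hhead.1.trans hhead.2.symm)] at this
    omega
  refine mem_image.2 ⟨(Fin.tail p.1, Fin.tail p.2), mem_hammingAdjPairs.2 ⟨?_, ?_, hd'⟩, ?_⟩
  · rwa [mem_headFiber, cons_tail_of_head_eq hhead.1]
  · rwa [mem_headFiber, cons_tail_of_head_eq hhead.2]
  · simp only [Prod.map, cons_tail_of_head_eq hhead.1, cons_tail_of_head_eq hhead.2]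

lemma card_hammingAdjPairs_filter_head_ne_le (V : Finset (Fin (n + 1) → α)) {c d : α}
    (hcd : c ≠ d) :
    #{p ∈ hammingAdjPairs V | (p.1 0, p.2 0) = (c, d)} ≤
      #(headFiber V c ∩ headFiber V d) := by
  refine (card_le_card fun p hp => ?_).trans
    (card_image_le (f := fun w => ((Fin.cons c w : Fin (n + 1) → α), Fin.cons d w)))
  obtain ⟨⟨h1, h2, hd⟩, hhead⟩ := by simpa only [mem_filter, mem_hammingAdjPairs] using hp
  simp only [Prod.mk.injEq] at hhead
  have htail : Fin.tail p.1 = Fin.tail p.2 := by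
    have := hammingDist_eq_tail_add p.1 p.2
    rw [if_neg (by rw [hhead.1, hhead.2]; exact hcd)] at this
    exact hammingDist_eq_zero.1 (by omega)
  refine mem_image.2 ⟨Fin.tail p.1, mem_inter.2 ⟨?_, ?_⟩, ?_⟩
  · rwa [mem_headFiber, cons_tail_of_head_eq hhead.1]
  · rwa [mem_headFiber, htail, cons_tail_of_head_eq hhead.2]
  · rw [cons_tail_of_head_eq hhead.1, htail, cons_tail_of_head_eq hhead.2]

theorem card_hammingAdjPairs_le [Fintype α] :
    ∀ {n : ℕ} (V : Finset (Fin n → α)),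
      (#(hammingAdjPairs V) : ℝ) ≤ (Fintype.card α - 1) * (#V * logb 2 #V)
  | 0, V => by
    have hempty : hammingAdjPairs V = ∅ :=
      filter_false_of_mem fun p _ => by simp [Subsingleton.elim p.1 p.2]
    have hcard : #V ≤ 1 := card_le_one.2 fun u _ v _ => Subsingleton.elim u v
    interval_cases #V <;> simp [hempty]
  | n + 1, V => by
    set F : α → α → ℕ := fun c d => #{p ∈ hammingAdjPairs V | (p.1 0, p.2 0) = (c, d)}
    set a : α → ℝ := fun c => #(headFiber V c)
    have hsplit : #(hammingAdjPairs V) = ∑ c, (F c c + ∑ d ∈ univ.erase c, F c d) := by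
      rw [card_eq_sum_card_fiberwise (f := fun p => (p.1 0, p.2 0)) (t := univ)
        fun p _ => mem_coe.2 (mem_univ _), ← Finset.univ_product_univ, sum_product]
      exact sum_congr rfl fun c _ => (add_sum_erase _ _ (mem_univ c)).symm
    have hdiag : ∀ c, (F c c : ℝ) ≤ (Fintype.card α - 1) * (a c * logb 2 (a c)) := fun c =>
      (Nat.cast_le.2 (card_hammingAdjPairs_filter_head_eq_le V c)).trans
        (card_hammingAdjPairs_le (headFiber V c))
    have hoff : ∀ c, ∀ d ∈ univ.erase c, (F c d : ℝ) ≤ min (a c) (a d) := fun c d hd => by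
      have := (card_hammingAdjPairs_filter_head_ne_le V (ne_of_mem_erase hd).symm).trans
        (le_min (card_le_card inter_subset_left) (card_le_card inter_subset_right))
      simp only [F, a]
      exact_mod_cast this
    have hN : ∑ c, a c = #V := by
      simp only [a]
      exact_mod_cast sum_card_headFiber V
    calc (#(hammingAdjPairs V) : ℝ)
        = ∑ c, ((F c c : ℝ) + ∑ d ∈ univ.erase c, (F c d : ℝ)) := by exact_mod_cast hsplit
      _ ≤ ∑ c, ((Fintype.card α - 1) * (a c * logb 2 (a c))
            + ∑ d ∈ univ.erase c, min (a c) (a d)) := by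
          gcongr with c _ d hd
          · exact hdiag c
          · exact hoff c d hd
      _ = (Fintype.card α - 1) * ∑ c, a c * logb 2 (a c)
            + ∑ c, ∑ d ∈ univ.erase c, min (a c) (a d) := by
          rw [sum_add_distrib, mul_sum]
      _ ≤ (Fintype.card α - 1) * ∑ c, a c * logb 2 (a c)
            + (Fintype.card α - 1) * ((∑ c, a c) * logb 2 (∑ c, a c)
              - ∑ c, a c * logb 2 (a c)) := by
          gcongr
          exact sum_sum_erase_min_le a fun c => Nat.cast_nonneg _
      _ = (Fintype.card α - 1) * (#V * logb 2 #V) := by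
          rw [hN]
          ring

end Hamming

lemma SimpleGraph.Subgraph.two_mul_ncard_edgeSet {V : Type*} [Fintype V] {G : SimpleGraph V}
    (S : G.Subgraph) [DecidableRel S.Adj] :
    2 * S.edgeSet.ncard = #{x : V × V | S.Adj x.1 x.2} := by
  classical
  rw [← S.edgeSet_spanningCoe, ← coe_edgeFinset, Set.ncard_coe_finset, two_mul_card_edgeFinset]
  congr! with ⟨u, v⟩

theorem subgraph_avg_degree_log_bound_general (n k : ℕ) (hk : 2 ≤ k)
    (S : (hammingGraph n k).Subgraph) :
    (S.verts.ncard : ℝ) * Real.logb 2 (S.verts.ncard)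
      ≥ 2 * (S.edgeSet.ncard : ℝ) / ((k : ℝ) - 1) := by
  classical
  have : NeZero k := ⟨by omega⟩
  have hk1 : (0 : ℝ) < k - 1 := sub_pos.2 (Nat.one_lt_cast.2 hk)
  have hedges : 2 * S.edgeSet.ncard ≤ #(hammingAdjPairs S.verts.toFinset) := by
    rw [S.two_mul_ncard_edgeSet]
    refine card_le_card fun p hp => mem_hammingAdjPairs.2 ?_
    have hadj := (mem_filter.1 hp).2
    simpa using ⟨S.edge_vert hadj, S.edge_vert hadj.symm, S.adj_sub hadj⟩
  have hbound := card_hammingAdjPairs_le S.verts.toFinset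
  rw [ZMod.card, ← Set.ncard_eq_toFinset_card'] at hbound
  rw [ge_iff_le, div_le_iff₀ hk1]
  calc 2 * (S.edgeSet.ncard : ℝ) ≤ #(hammingAdjPairs S.verts.toFinset) := by
        exact_mod_cast hedges
    _ ≤ _ := hbound
    _ = _ := mul_comm _ _

/-- For a finite nonempty subgraph `S` of `H(n,k)` (`k ≥ 2`) with average
degree `d̄ = 2|E(S)|/|V(S)|`, we have `log₂ |V(S)| ≥ d̄/(k-1)`, i.e.
`|V(S)|·log₂|V(S)| ≥ 2|E(S)|/(k-1)`. -/
theorem subgraph_avg_degree_log_bound (n k : ℕ) (hk : 2 ≤ k)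
    (S : (hammingGraph n k).Subgraph)
    (hV : S.verts.Finite) (hVne : S.verts.Nonempty) (hE : S.edgeSet.Finite) :
    (S.verts.ncard : ℝ) * Real.logb 2 (S.verts.ncard)
      ≥ 2 * (S.edgeSet.ncard : ℝ) / ((k : ℝ) - 1) :=
  subgraph_avg_degree_log_bound_general n k hk S
end
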